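/- arXiv:2407.11882 — 2 statements merged into one kernel-verified Lean document; each statement's English description precedes it below -/
import Mathlib

section
/- With channel gain |h|² ∼ Exp(1) independent of noise power σ² having log-uniform density 1/(2x ln ρ) on [σ²_n/ρ, ρσ²_n], the outage probability ℙ(P|h|²/σ² < κ) equals 1 − (1/(2 ln ρ))·[Ei(−κρσ²_n/P) − Ei(−κσ²_n/(Pρ))], for P > 0, κ > 0, ρ > 1, σ²_n > 0. -/
open MeasureTheory

/-- `Ei (−z) = −∫_z^∞ e^{−t}/t dt` for `z > 0`. -/
noncomputable def EiNeg (z : ℝ) : ℝ := -∫ t in Set.Ioi z, Real.exp (-t) / t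

/-!
Conditioning on the noise power `y`, the outage event is `|h|² < κy/P`, of probability
`1 - e^{-κy/P}`. Integrating against the log-uniform density splits into `∫ dy/y = 2 ln ρ`
and `∫ e^{-κy/P}/y dy`, which the substitution `t = κy/P` turns into a difference of values of
`Ei(-·)`.
-/

open Set Real ProbabilityTheory

lemma integrableOn_exp_neg_div_Ioi {z : ℝ} (hz : 0 < z) :
    IntegrableOn (fun t => exp (-t) / t) (Ioi z) := by
  refine ((exp_neg_integrableOn_Ioi z one_pos).div_const z).mono'
    ((by fun_prop : Measurable fun t => exp (-t)).div measurable_id).aestronglyMeasurable ?_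
  filter_upwards [ae_restrict_mem measurableSet_Ioi] with t (ht : z < t)
  rw [norm_of_nonneg (div_nonneg (exp_pos _).le (hz.trans ht).le), neg_one_mul]
  exact div_le_div_of_nonneg_left (exp_pos _).le hz ht.le

lemma EiNeg_sub_EiNeg {a b : ℝ} (ha : 0 < a) (hb : 0 < b) :
    EiNeg b - EiNeg a = ∫ t in a..b, exp (-t) / t := by
  rw [← intervalIntegral.integral_Ioi_sub_Ioi' (integrableOn_exp_neg_div_Ioi ha)
    (integrableOn_exp_neg_div_Ioi hb), EiNeg, EiNeg]
  ring

lemma integral_exp_neg_mul_div {a b c : ℝ} (ha : 0 < a) (hb : 0 < b) (hc : 0 < c) :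
    ∫ y in a..b, exp (-(c * y)) / y = EiNeg (c * b) - EiNeg (c * a) := by
  have hrescale : ∀ y, exp (-(c * y)) / y = c * (exp (-(c * y)) / (c * y)) := fun y => by
    rw [mul_div_assoc', mul_div_mul_left _ _ hc.ne']
  simp_rw [hrescale]
  rw [intervalIntegral.integral_const_mul, ← smul_eq_mul,
    intervalIntegral.smul_integral_comp_mul_left (fun t => exp (-t) / t),
    EiNeg_sub_EiNeg (by positivity) (by positivity)]

lemma setIntegral_Icc_one_sub_exp_neg_mul_div {a b c : ℝ} (ha : 0 < a) (hab : a ≤ b)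
    (hc : 0 < c) :
    ∫ y in Icc a b, (1 - exp (-(c * y))) / y
      = log (b / a) - (EiNeg (c * b) - EiNeg (c * a)) := by
  have hb : 0 < b := ha.trans_le hab
  have h0 : (0 : ℝ) ∉ uIcc a b := by
    rw [uIcc_of_le hab]; exact fun h => ha.not_ge h.1
  have hne : ∀ y ∈ uIcc a b, y ≠ 0 := fun y hy h => h0 (h ▸ hy)
  rw [integral_Icc_eq_integral_Ioc, ← intervalIntegral.integral_of_le hab]
  have hinv : IntervalIntegrable (fun y => 1 / y) volume a b :=
    (continuousOn_const.div continuousOn_id hne).intervalIntegrable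
  have hexp : IntervalIntegrable (fun y => exp (-(c * y)) / y) volume a b :=
    ((by fun_prop : Continuous fun y => exp (-(c * y))).continuousOn.div continuousOn_id
      hne).intervalIntegrable
  simp_rw [sub_div]
  rw [intervalIntegral.integral_sub hinv hexp,
    integral_one_div h0, integral_exp_neg_mul_div ha hb hc]

lemma setIntegral_logUniform_mul_one_sub_exp_neg {ρ σ c : ℝ} (hρ : 1 < ρ) (hσ : 0 < σ)
    (hc : 0 < c) :
    ∫ y in Icc (σ / ρ) (ρ * σ), 1 / (2 * y * log ρ) * (1 - exp (-(c * y)))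
      = 1 - 1 / (2 * log ρ) * (EiNeg (c * (ρ * σ)) - EiNeg (c * (σ / ρ))) := by
  have hρ0 : 0 < ρ := one_pos.trans hρ
  have hlog : 0 < log ρ := log_pos hρ
  have hle : σ / ρ ≤ ρ * σ :=
    (div_le_self hσ.le hρ.le).trans (le_mul_of_one_le_left hσ.le hρ.le)
  have hintegrand : ∀ y, 1 / (2 * y * log ρ) * (1 - exp (-(c * y)))
      = (2 * log ρ)⁻¹ * ((1 - exp (-(c * y))) / y) := fun y => by ring
  have hratio : ρ * σ / (σ / ρ) = ρ ^ 2 := by field_simp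
  simp_rw [hintegrand]
  rw [integral_const_mul, setIntegral_Icc_one_sub_exp_neg_mul_div (div_pos hσ hρ0) hle hc,
    hratio, log_pow]
  field_simp
  ring

lemma expMeasure_Iio {r : ℝ} (hr : 0 < r) (c : ℝ) :
    expMeasure r (Iio c) = ENNReal.ofReal (1 - exp (-(r * c))) := by
  have : IsProbabilityMeasure (expMeasure r) := isProbabilityMeasure_expMeasure hr
  have hsingleton : expMeasure r {c} = 0 :=
    withDensity_absolutelyContinuous _ _ Real.volume_singleton
  rw [measure_congr (Iio_ae_eq_Iic' hsingleton), ← ofReal_cdf, cdf_expMeasure_eq hr]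
  split_ifs with hc
  · rfl
  · rw [ENNReal.ofReal_zero, ENNReal.ofReal_of_nonpos]
    simpa using (mul_neg_of_pos_of_neg hr (not_le.1 hc)).le

lemma withDensity_exp_neg_eq_expMeasure :
    (volume.withDensity fun x => ENNReal.ofReal (if 0 ≤ x then exp (-x) else 0))
      = expMeasure 1 := by
  change _ = volume.withDensity fun x => exponentialPDF 1 x
  simp_rw [exponentialPDF_eq, one_mul]

lemma prod_setOf_mul_lt_mul (μ ν : Measure ℝ) [SFinite μ] [SFinite ν] {P : ℝ} (hP : 0 < P)
    (κ : ℝ) :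
    μ.prod ν {p : ℝ × ℝ | P * p.1 < κ * p.2} = ∫⁻ y, μ (Iio (κ * y / P)) ∂ν := by
  rw [Measure.prod_apply_symm (measurableSet_lt (by fun_prop) (by fun_prop))]
  refine lintegral_congr fun y => congr_arg μ (ext fun x => ?_)
  simp only [mem_preimage, mem_ofPred_eq, mem_Iio, lt_div_iff₀ hP, mul_comm x]

lemma toReal_lintegral_withDensity_ite {α : Type*} [MeasurableSpace α] {μ : Measure α}
    {s : Set α} [DecidablePred (· ∈ s)] (hs : MeasurableSet s) {d h : α → ℝ}
    (hd : Measurable d) (hh : Measurable h) (hdh : IntegrableOn (fun y => d y * h y) s μ)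
    (hd0 : ∀ y ∈ s, 0 ≤ d y) (hh0 : ∀ y ∈ s, 0 ≤ h y) :
    (∫⁻ y, ENNReal.ofReal (h y)
        ∂μ.withDensity fun y => ENNReal.ofReal (if y ∈ s then d y else 0)).toReal
      = ∫ y in s, d y * h y ∂μ := by
  have hdens : (fun y => ENNReal.ofReal (if y ∈ s then d y else 0))
      = s.indicator fun y => ENNReal.ofReal (d y) := by
    ext y; split_ifs with hy <;> simp [hy]
  rw [hdens, withDensity_indicator hs,
    lintegral_withDensity_eq_lintegral_mul _ hd.ennreal_ofReal hh.ennreal_ofReal,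
    Pi.mul_def,
    setLIntegral_congr_fun hs fun y hy => (ENNReal.ofReal_mul (hd0 y hy)).symm,
    ← ofReal_integral_eq_lintegral_ofReal hdh
      ((ae_restrict_iff' hs).2 (.of_forall fun y hy => mul_nonneg (hd0 y hy) (hh0 y hy))),
    ENNReal.toReal_ofReal (setIntegral_nonneg hs fun y hy => mul_nonneg (hd0 y hy) (hh0 y hy))]

/-- With channel gain `|h|² ∼ Exp(1)` independent of the noise power with log-uniform density
`1/(2 y ln ρ)` on `[σ²ₙ/ρ, ρσ²ₙ]`, the outage probability `ℙ(P |h|² < κ σ²)` equals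
`1 − (1/(2 ln ρ)) [Ei(−κρσ²ₙ/P) − Ei(−κσ²ₙ/(Pρ))]`. -/
theorem stmt_5 (P κ ρ σn2 : ℝ) (hP : 0 < P) (hκ : 0 < κ) (hρ : 1 < ρ) (hσn2 : 0 < σn2) :
    (((volume.withDensity fun x =>
          ENNReal.ofReal (if 0 ≤ x then Real.exp (-x) else 0)).prod
        (volume.withDensity fun y =>
          ENNReal.ofReal
            (if y ∈ Set.Icc (σn2 / ρ) (ρ * σn2) then 1 / (2 * y * Real.log ρ) else 0)))
      {p : ℝ × ℝ | P * p.1 < κ * p.2}).toReal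
      = 1 - 1 / (2 * Real.log ρ) *
          (EiNeg (κ * ρ * σn2 / P) - EiNeg (κ * σn2 / (P * ρ))) := by
  have hlog : 0 < log ρ := log_pos hρ
  have hlower : 0 < σn2 / ρ := div_pos hσn2 (one_pos.trans hρ)
  have hdens_nonneg : ∀ y ∈ Icc (σn2 / ρ) (ρ * σn2), 0 ≤ 1 / (2 * y * log ρ) := fun y hy => by
    have := hlower.trans_le hy.1
    positivity
  have hcdf_nonneg : ∀ y ∈ Icc (σn2 / ρ) (ρ * σn2), 0 ≤ 1 - exp (-(κ / P * y)) := fun y hy => by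
    have := hlower.trans_le hy.1
    rw [sub_nonneg, exp_le_one_iff, neg_nonpos]
    positivity
  have hint : IntegrableOn (fun y => 1 / (2 * y * log ρ) * (1 - exp (-(κ / P * y))))
      (Icc (σn2 / ρ) (ρ * σn2)) := by
    refine ContinuousOn.integrableOn_Icc (ContinuousOn.mul ?_ (by fun_prop))
    exact continuousOn_const.div (by fun_prop) fun y hy => by
      have := hlower.trans_le hy.1
      positivity
  have : IsProbabilityMeasure (expMeasure 1) := isProbabilityMeasure_expMeasure one_pos
  rw [withDensity_exp_neg_eq_expMeasure, prod_setOf_mul_lt_mul _ _ hP]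
  simp_rw [expMeasure_Iio one_pos, one_mul, mul_div_right_comm κ _ P]
  rw [toReal_lintegral_withDensity_ite measurableSet_Icc (by fun_prop) (by fun_prop) hint
      hdens_nonneg hcdf_nonneg,
    setIntegral_logUniform_mul_one_sub_exp_neg hρ hσn2 (div_pos hκ hP)]
  congr 3 <;> field_simp
end

section
/- For P > 0 and independent P_W ∼ Exp(mean P), σ²_W log-uniform on [μ₁, μ₂], and threshold τ with μ₁ < τ ≤ μ₂, the missed detection probability satisfies ℙ(P_W + σ²_W ≤ τ) = ∫_{μ₁}^{τ} (1/(2y ln ρ))(1 − e^{−(τ−y)/P}) dy = (1/(2 ln ρ))[ln(τ/μ₁) − e^{−τ/P}(Ei(τ/P) − Ei(μ₁/P))]. -/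
open MeasureTheory
open scoped ENNReal

/-- For `P > 0`, independent `P_W ∼ Exp(mean P)` and log-uniform `σ²_W` on `[μ₁, μ₂]`
(`μ₁ = σ²ₙ/ρ`, `μ₂ = ρσ²ₙ`), and threshold `τ` with `μ₁ < τ ≤ μ₂`, the missed detection
probability is
`ℙ(P_W + σ²_W ≤ τ) = ∫_{μ₁}^{τ} (1/(2 y ln ρ))(1 − e^{−(τ−y)/P}) dy
  = (1/(2 ln ρ))[ln(τ/μ₁) − e^{−τ/P}(Ei(τ/P) − Ei(μ₁/P))]`,
where `Ei(τ/P) − Ei(μ₁/P) = ∫_{μ₁/P}^{τ/P} e^t/t dt`. -/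
theorem stmt_16 (P ρ σn2 τ : ℝ) (hP : 0 < P) (hρ : 1 < ρ) (hσn2 : 0 < σn2)
    (hτ₁ : σn2 / ρ < τ) (hτ₂ : τ ≤ ρ * σn2) :
    (((volume.withDensity fun x =>
          ENNReal.ofReal (if 0 ≤ x then 1 / P * Real.exp (-x / P) else 0)).prod
        (volume.withDensity fun y =>
          ENNReal.ofReal
            (if y ∈ Set.Icc (σn2 / ρ) (ρ * σn2) then 1 / (2 * y * Real.log ρ) else 0)))
          {p : ℝ × ℝ | p.1 + p.2 ≤ τ}).toReal
        = ∫ y in (σn2 / ρ)..τ, 1 / (2 * y * Real.log ρ) * (1 - Real.exp (-(τ - y) / P)) ∧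
    (∫ y in (σn2 / ρ)..τ, 1 / (2 * y * Real.log ρ) * (1 - Real.exp (-(τ - y) / P)))
        = 1 / (2 * Real.log ρ) *
            (Real.log (τ / (σn2 / ρ)) -
              Real.exp (-τ / P) * ∫ t in (σn2 / ρ / P)..(τ / P), Real.exp t / t) := by
  constructor
  · set a := σn2 / ρ with ha_def
    set b := ρ * σn2 with hb_def
    have ha : 0 < a := div_pos hσn2 (lt_trans one_pos hρ)
    have hL : 0 < Real.log ρ := Real.log_pos hρ
    set f : ℝ → ℝ≥0∞ := fun x => ENNReal.ofReal (if 0 ≤ x then 1 / P * Real.exp (-x / P) else 0)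
      with hf_def
    set g : ℝ → ℝ≥0∞ := fun y =>
      ENNReal.ofReal (if y ∈ Set.Icc a b then 1 / (2 * y * Real.log ρ) else 0) with hg_def
    have hfm : Measurable f := by
      apply Measurable.ennreal_ofReal
      exact Measurable.ite measurableSet_Ici
        (measurable_const.mul ((Real.continuous_exp.comp
          ((continuous_neg).div_const P)).measurable)) measurable_const
    have hgm : Measurable g := by
      apply Measurable.ennreal_ofReal
      apply Measurable.ite measurableSet_Icc _ measurable_const
      exact (measurable_const.div ((measurable_const.mul measurable_id).mul measurable_const))
    -- the exponential CDF
    have hexp : ∀ c : ℝ, (volume.withDensity f) (Set.Iic c)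
        = ENNReal.ofReal (if 0 ≤ c then 1 - Real.exp (-c / P) else 0) := by
      intro c
      rw [withDensity_apply f measurableSet_Iic]
      by_cases hc : 0 ≤ c
      · rw [if_pos hc]
        have hind : ∀ x : ℝ, f x
            = Set.indicator (Set.Ici 0) (fun x => ENNReal.ofReal (1 / P * Real.exp (-x / P))) x := by
          intro x
          by_cases hx : 0 ≤ x
          · simp [hf_def, hx, Set.indicator_of_mem (Set.mem_Ici.mpr hx)]
          · simp [hf_def, hx, Set.indicator_of_notMem (fun h => hx (Set.mem_Ici.mp h))]
        simp only [hind]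
        rw [lintegral_indicator measurableSet_Ici, Measure.restrict_restrict measurableSet_Ici]
        have : Set.Ici (0:ℝ) ∩ Set.Iic c = Set.Icc 0 c := by
          ext x; simp [Set.mem_Icc, and_comm]
        rw [this]
        have hint : IntegrableOn (fun x : ℝ => 1 / P * Real.exp (-x / P)) (Set.Icc 0 c) volume :=
          (Continuous.continuousOn (by continuity)).integrableOn_Icc
        rw [← ofReal_integral_eq_lintegral_ofReal hint
          (ae_of_all _ (fun x => by positivity))]
        congr 1
        rw [MeasureTheory.integral_Icc_eq_integral_Ioc,
          ← intervalIntegral.integral_of_le hc]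
        have : (∫ x in (0:ℝ)..c, 1 / P * Real.exp (-x / P))
            = 1 / P * ∫ x in (0:ℝ)..c, Real.exp (x / (-P)) := by
          rw [intervalIntegral.integral_const_mul]
          congr 1
          apply intervalIntegral.integral_congr
          intro x _
          simp only
          rw [div_neg, neg_div]
        rw [this, intervalIntegral.integral_comp_div Real.exp (neg_ne_zero.mpr hP.ne'),
          integral_exp, show (0:ℝ) / (-P) = 0 by ring,
          show c / (-P) = -c / P by ring, Real.exp_zero, smul_eq_mul]
        field_simp
        ring
      · rw [if_neg hc]
        have : ∀ x ∈ Set.Iic c, f x = 0 := by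
          intro x hx
          have : ¬ (0 ≤ x) := by
            intro h; exact hc (le_trans h (Set.mem_Iic.mp hx))
          simp [hf_def, this]
        rw [setLIntegral_congr_fun measurableSet_Iic (show Set.EqOn f (fun _ => 0) (Set.Iic c) from this)]
        simp
    -- main computation
    have hS : MeasurableSet {p : ℝ × ℝ | p.1 + p.2 ≤ τ} :=
      measurableSet_le (measurable_fst.add measurable_snd) measurable_const
    rw [Measure.prod_apply_symm hS]
    have hpre : ∀ y : ℝ, ((fun x => (x, y)) ⁻¹' {p : ℝ × ℝ | p.1 + p.2 ≤ τ}) = Set.Iic (τ - y) := by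
      intro y; ext x; simp [le_sub_iff_add_le]
    simp only [hpre, hexp]
    rw [lintegral_withDensity_eq_lintegral_mul volume hgm (by
      apply Measurable.ennreal_ofReal
      apply Measurable.ite (measurableSet_le measurable_const (measurable_const.sub measurable_id))
        _ measurable_const
      exact (measurable_const.sub ((Real.continuous_exp.comp
        (((continuous_const.sub continuous_id).neg).div_const P)).measurable)))]
    set h : ℝ → ℝ := fun y => 1 / (2 * y * Real.log ρ) * (1 - Real.exp (-(τ - y) / P)) with hh_def
    have hpt : ∀ y : ℝ, (g * fun y => ENNReal.ofReal (if 0 ≤ τ - y then 1 - Real.exp (-(τ - y) / P) else 0)) y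
        = Set.indicator (Set.Icc a τ) (fun y => ENNReal.ofReal (h y)) y := by
      intro y
      simp only [Pi.mul_apply, hg_def]
      by_cases h1 : y ∈ Set.Icc a τ
      · have h1' : y ∈ Set.Icc a b := ⟨h1.1, le_trans h1.2 hτ₂⟩
        have h2 : 0 ≤ τ - y := sub_nonneg.mpr h1.2
        have hy0 : 0 < y := lt_of_lt_of_le ha h1.1
        rw [Set.indicator_of_mem h1, if_pos h1', if_pos h2, hh_def, ← ENNReal.ofReal_mul
          (by positivity)]
      · rw [Set.indicator_of_notMem h1]
        by_cases h2 : y ∈ Set.Icc a b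
        · have h3 : ¬ (0 ≤ τ - y) := by
            intro hc
            exact h1 ⟨h2.1, by linarith⟩
          simp [h3]
        · simp [h2]
    simp only [hpt]
    rw [lintegral_indicator measurableSet_Icc]
    have hyne : ∀ y ∈ Set.Icc a τ, y ≠ 0 := fun y hy => (lt_of_lt_of_le ha hy.1).ne'
    have hcont : ContinuousOn h (Set.Icc a τ) := by
      have c1 : Continuous fun y : ℝ => 2 * y * Real.log ρ :=
        (continuous_const.mul continuous_id).mul continuous_const
      have c2 : Continuous fun y : ℝ => 1 - Real.exp (-(τ - y) / P) :=
        continuous_const.sub (Real.continuous_exp.comp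
          (((continuous_const.sub continuous_id).neg).div_const P))
      exact (continuousOn_const.div c1.continuousOn (fun y hy => by
        have hy0 : 0 < y := lt_of_lt_of_le ha hy.1
        positivity)).mul c2.continuousOn
    have hint : IntegrableOn h (Set.Icc a τ) volume := hcont.integrableOn_Icc
    have hnn : ∀ y ∈ Set.Icc a τ, 0 ≤ h y := by
      intro y hy
      have hy0 : 0 < y := lt_of_lt_of_le ha hy.1
      have hexple : Real.exp (-(τ - y) / P) ≤ 1 := by
        rw [Real.exp_le_one_iff]
        apply div_nonpos_of_nonpos_of_nonneg _ hP.le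
        have := hy.2
        linarith
      have : 0 ≤ 1 - Real.exp (-(τ - y) / P) := by linarith
      have h2 : 0 ≤ 1 / (2 * y * Real.log ρ) := by positivity
      exact mul_nonneg h2 this
    rw [← ofReal_integral_eq_lintegral_ofReal hint
      ((ae_restrict_iff' measurableSet_Icc).mpr (ae_of_all _ hnn))]
    rw [ENNReal.toReal_ofReal (setIntegral_nonneg measurableSet_Icc hnn)]
    rw [MeasureTheory.integral_Icc_eq_integral_Ioc, ← intervalIntegral.integral_of_le hτ₁.le]
  · set a := σn2 / ρ with ha_def
    have ha : 0 < a := div_pos hσn2 (lt_trans one_pos hρ)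
    have hL : 0 < Real.log ρ := Real.log_pos hρ
    have h0 : (0:ℝ) ∉ Set.uIcc a τ := by
      rw [Set.uIcc_of_le hτ₁.le]
      intro h
      exact absurd h.1 (not_le.mpr ha)
    have hne : ∀ y ∈ Set.uIcc a τ, y ≠ 0 := fun y hy h => h0 (h ▸ hy)
    have hcont1 : ContinuousOn (fun y : ℝ => 1 / y) (Set.uIcc a τ) :=
      ContinuousOn.div continuousOn_const continuousOn_id hne
    have hcont2 : ContinuousOn (fun y : ℝ => Real.exp (y / P) / y) (Set.uIcc a τ) :=
      ContinuousOn.div (Real.continuous_exp.comp (continuous_id.div_const P)).continuousOn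
        continuousOn_id hne
    have hi1 : IntervalIntegrable (fun y : ℝ => 1 / y) volume a τ :=
      hcont1.intervalIntegrable
    have hi2 : IntervalIntegrable (fun y : ℝ => Real.exp (-τ / P) * (Real.exp (y / P) / y))
        volume a τ := (hcont2.intervalIntegrable).const_mul _
    have key : (∫ y in a..τ, Real.exp (y / P) / y) = ∫ t in (a / P)..(τ / P), Real.exp t / t := by
      have h := intervalIntegral.integral_comp_div (a := a) (b := τ) (c := P)
        (fun t => Real.exp t / t) hP.ne'
      have h2 : ∀ y : ℝ, Real.exp (y / P) / (y / P) = P * (Real.exp (y / P) / y) := by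
        intro y
        rw [div_div_eq_mul_div, mul_comm, mul_div_assoc]
      simp only [h2] at h
      rw [intervalIntegral.integral_const_mul, smul_eq_mul] at h
      have hPne : P ≠ 0 := hP.ne'
      field_simp at h
      exact h
    calc (∫ y in a..τ, 1 / (2 * y * Real.log ρ) * (1 - Real.exp (-(τ - y) / P)))
        = ∫ y in a..τ, 1 / (2 * Real.log ρ) *
            ((1 / y) - Real.exp (-τ / P) * (Real.exp (y / P) / y)) := by
          apply intervalIntegral.integral_congr
          intro y hy
          have hy0 : y ≠ 0 := hne y hy
          have : Real.exp (-(τ - y) / P) = Real.exp (-τ / P) * Real.exp (y / P) := by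
            rw [← Real.exp_add]; ring_nf
          simp only
          rw [this]
          field_simp
      _ = 1 / (2 * Real.log ρ) * ∫ y in a..τ,
            ((1 / y) - Real.exp (-τ / P) * (Real.exp (y / P) / y)) := by
          rw [intervalIntegral.integral_const_mul]
      _ = 1 / (2 * Real.log ρ) *
            ((∫ y in a..τ, 1 / y) - ∫ y in a..τ, Real.exp (-τ / P) * (Real.exp (y / P) / y)) := by
          rw [intervalIntegral.integral_sub hi1 hi2]
      _ = 1 / (2 * Real.log ρ) *
            (Real.log (τ / a) - Real.exp (-τ / P) * ∫ t in (a / P)..(τ / P), Real.exp t / t) := by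
          rw [integral_one_div h0, intervalIntegral.integral_const_mul, key]
end
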